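/- Let d be a derivation of k[X]=k[x₁,…,xₙ] over a field k of characteristic 0. If d has no Darboux polynomials (no F ∉ k with d(F)=ΛF, Λ ∈ k[X]), then the field of constants of the extension of d to k(X) is trivial: k(X)^d = k. -/
import Mathlib


open MvPolynomial

theorem stmt_9 (k : Type*) [Field k] [CharZero k] (n : ℕ)
    (d : Derivation k (MvPolynomial (Fin n) k) (MvPolynomial (Fin n) k))
    (hnoDarboux : ¬ ∃ (F Λ : MvPolynomial (Fin n) k),
      (∀ c : k, F ≠ C c) ∧ d F = Λ * F) :
    ∀ p q : MvPolynomial (Fin n) k, q ≠ 0 → q * d p = p * d q →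
      ∃ c : k, p = C c * q := by
  push_neg at hnoDarboux
  have hdar : ∀ F Λ : MvPolynomial (Fin n) k, d F = Λ * F → ∃ c : k, F = C c := by
    intro F Λ h
    by_contra hc
    push_neg at hc
    exact (hnoDarboux F Λ hc) h
  intro p q hq hpq
  obtain ⟨p', q', g, hcop, hp, hq'⟩ :=
    UniqueFactorizationMonoid.exists_reduced_factors' p q hq
  have hg : g ≠ 0 := fun h => hq (by rw [← hq', h, zero_mul])
  have hq'ne : q' ≠ 0 := fun h => hq (by rw [← hq', h, mul_zero])
  -- derive q' * d p' = p' * d q'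
  have key : q' * d p' = p' * d q' := by
    have h1 : (g * q') * d (g * p') = (g * p') * d (g * q') := by
      rw [hp, hq']; exact hpq
    rw [d.leibniz, d.leibniz] at h1
    simp only [smul_eq_mul] at h1
    have h2 : g * (g * (q' * d p')) = g * (g * (p' * d q')) := by ring_nf; ring_nf at h1; linear_combination h1
    have h3 := mul_left_cancel₀ hg (mul_left_cancel₀ hg h2)
    exact h3
  -- q' divides p' * d q', coprime to p', so q' ∣ d q'
  have hdvd : q' ∣ d q' := by
    have : q' ∣ p' * d q' := ⟨d p', key.symm⟩
    exact (hcop.symm.dvd_of_dvd_mul_left) this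
  obtain ⟨Λ, hΛ⟩ := hdvd
  obtain ⟨c, hc⟩ := hdar q' Λ (by rw [hΛ]; ring)
  have hcne : c ≠ 0 := by
    intro h; apply hq'ne; rw [hc, h, map_zero]
  -- d q' = 0
  have hdq' : d q' = 0 := by
    rw [hc, show (C c : MvPolynomial (Fin n) k) = algebraMap k _ c from rfl,
      Derivation.map_algebraMap]
  -- so d p' = 0
  have hdp' : d p' = 0 := by
    have : q' * d p' = 0 := by rw [key, hdq', mul_zero]
    exact (mul_eq_zero.mp this).resolve_left hq'ne
  obtain ⟨c', hc'⟩ := hdar p' 0 (by rw [hdp', zero_mul])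
  refine ⟨c' / c, ?_⟩
  rw [← hp, ← hq', hc, hc']
  rw [div_eq_mul_inv, map_mul]
  rw [show C c' * C c⁻¹ * (g * C c) = g * C c' * (C c⁻¹ * C c) by ring,
    ← map_mul, inv_mul_cancel₀ hcne, map_one, mul_one]
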